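/- arXiv:math/0405353 — 3 statements merged into one kernel-verified Lean document; each statement's English description precedes it below -/
import Mathlib

section
/- Let γ be an affine line in ℝ² that contains infinitely many points of the integer lattice ℤ² and does not contain the origin. Let (K_n)_{n} be a collection of subgroups of ℤ² whose union K contains all but finitely many of the lattice points lying on γ, and suppose there exists a lattice point on γ that does not belong to K. Then the collection {K_n} contains infinitely many distinct subgroups. -/
/-!
Let `v` be a lattice point of `γ` outside every `K n` and `w = b - v` for another lattice point `b`
of `γ`; then all `v + k • w` lie on `γ`. If only finitely many subgroups `H` occur among the `K n`,
pick `D ≠ 0` with `D • w ∈ H` for each `H` containing some nonzero multiple of `w`. Each remaining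
`H` contains at most one point `v + (j * D) • w`, so for all but finitely many `j` this point lies
in an `H` with `D • w ∈ H`, and then so does `v = (v + (j * D) • w) - (j * D) • w`.
-/

namespace AddSubgroup

variable {G : Type*} [AddGroup G] {H : AddSubgroup G} {v w : G} {k k' : ℤ}

lemma sub_zsmul_mem_of_add_zsmul_mem (hk : v + k • w ∈ H) (hk' : v + k' • w ∈ H) :
    (k - k') • w ∈ H := by
  have h := H.add_mem (H.neg_mem hk') hk
  rwa [neg_add_rev, add_assoc, neg_add_cancel_left, ← neg_zsmul, ← add_zsmul,
    neg_add_eq_sub] at h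

lemma mem_of_add_zsmul_mem (hk : v + k • w ∈ H) (hw : k • w ∈ H) : v ∈ H := by
  simpa using H.sub_mem hk hw

end AddSubgroup

lemma Int.exists_ne_zero_forall_mem {s : Set (AddSubgroup ℤ)} (hs : s.Finite)
    (hbot : ∀ P ∈ s, P ≠ ⊥) : ∃ D ≠ 0, ∀ P ∈ s, D ∈ P := by
  induction s, hs using Set.Finite.induction_on with
  | empty => exact ⟨1, one_ne_zero, by simp⟩
  | @insert P s _ _ ih =>
    obtain ⟨D, hD0, hD⟩ := ih fun Q hQ => hbot Q (Set.mem_insert_of_mem P hQ)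
    obtain ⟨d, hdP, hd0⟩ := P.bot_or_exists_ne_zero.resolve_left (hbot P (Set.mem_insert P s))
    refine ⟨d * D, mul_ne_zero hd0 hD0, ?_⟩
    rintro Q (rfl | hQ)
    · simpa [mul_comm] using Q.zsmul_mem hdP D
    · simpa using Q.zsmul_mem (hD Q hQ) d

theorem AddSubgroup.exists_mem_of_finite_range_of_cover {G ι : Type*} [AddGroup G] {v w : G}
    (K : ι → AddSubgroup G) (hK : (Set.range K).Finite)
    (hcover : {k : ℤ | ∀ n, v + k • w ∉ K n}.Finite) : ∃ n, v ∈ K n := by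
  set P : AddSubgroup G → AddSubgroup ℤ := fun H => H.comap (zmultiplesHom G w)
  have hP {H : AddSubgroup G} {k : ℤ} : k ∈ P H ↔ k • w ∈ H := Iff.rfl
  obtain ⟨D, hD0, hD⟩ := Int.exists_ne_zero_forall_mem ((hK.image P).sdiff (t := {⊥}))
    fun Q hQ => hQ.2
  have hbad₁ : {j : ℤ | ∀ n, v + (j * D) • w ∉ K n}.Finite :=
    hcover.preimage (mul_left_injective₀ hD0).injOn
  have hbad₂ : {j : ℤ | ∃ n, P (K n) = ⊥ ∧ v + (j * D) • w ∈ K n}.Finite := by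
    refine (hK.biUnion fun H _ => Set.Subsingleton.finite (s := {j : ℤ | P H = ⊥ ∧
      v + (j * D) • w ∈ H}) ?_).subset ?_
    · rintro j ⟨hH, hj⟩ j' ⟨-, hj'⟩
      have hdiff : j * D - j' * D ∈ P H := hP.mpr (H.sub_zsmul_mem_of_add_zsmul_mem hj hj')
      rw [hH, AddSubgroup.mem_bot, ← sub_mul] at hdiff
      simpa [sub_eq_zero, hD0] using hdiff
    · rintro j ⟨n, hn⟩
      exact Set.mem_biUnion ⟨n, rfl⟩ hn
  obtain ⟨j, hj⟩ := (hbad₁.union hbad₂).infinite_compl.nonempty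
  simp only [Set.mem_compl_iff, Set.mem_union, Set.mem_ofPred_eq, not_or, not_forall, not_not,
    not_exists, not_and] at hj
  obtain ⟨⟨n, hn⟩, hgood⟩ := hj
  have hDn : D ∈ P (K n) := hD _ ⟨⟨K n, ⟨n, rfl⟩, rfl⟩, fun h => hgood n h hn⟩
  refine ⟨n, (K n).mem_of_add_zsmul_mem hn (hP.mp ?_)⟩
  simpa using (P (K n)).zsmul_mem hDn j

lemma add_smul_sub_mem_line {R E : Type*} [CommRing R] [AddCommGroup E] [Module R E] {p q x y : E}
    (hx : x ∈ {z : E | ∃ t : R, z = p + t • q}) (hy : y ∈ {z : E | ∃ t : R, z = p + t • q})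
    (s : R) : x + s • (y - x) ∈ {z : E | ∃ t : R, z = p + t • q} := by
  obtain ⟨t, rfl⟩ := hx
  obtain ⟨u, rfl⟩ := hy
  exact ⟨t + s * (u - t), by module⟩

theorem stmt_0_general {ι : Type*} (p q : ℝ × ℝ)
    (γ : Set (ℝ × ℝ)) (hγ : γ = {x : ℝ × ℝ | ∃ t : ℝ, x = p + t • q})
    (K : ι → AddSubgroup (ℤ × ℤ))
    (hinf : {v : ℤ × ℤ | ((v.1 : ℝ), (v.2 : ℝ)) ∈ γ}.Infinite)
    (hcofin : {v : ℤ × ℤ | ((v.1 : ℝ), (v.2 : ℝ)) ∈ γ ∧ ∀ n, v ∉ K n}.Finite)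
    (hex : ∃ v : ℤ × ℤ, ((v.1 : ℝ), (v.2 : ℝ)) ∈ γ ∧ ∀ n, v ∉ K n) :
    (Set.range K).Infinite := by
  obtain ⟨v, hvγ, hvK⟩ := hex
  obtain ⟨b, hbγ, hbv⟩ := (hinf.sdiff (Set.finite_singleton v)).nonempty
  have hw : b - v ≠ 0 := sub_ne_zero.mpr hbv
  have hline (k : ℤ) : (((v + k • (b - v)).1 : ℝ), ((v + k • (b - v)).2 : ℝ)) ∈ γ := by
    convert hγ ▸ add_smul_sub_mem_line (hγ ▸ hvγ) (hγ ▸ hbγ) (k : ℝ) using 1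
    ext <;> simp
  have hcover : {k : ℤ | ∀ n, v + k • (b - v) ∉ K n}.Finite :=
    (hcofin.preimage ((add_right_injective v).comp (smul_left_injective ℤ hw)).injOn).subset
      fun k hk => ⟨hline k, hk⟩
  intro hK
  obtain ⟨n, hn⟩ := AddSubgroup.exists_mem_of_finite_range_of_cover K hK hcover
  exact hvK n hn

/-- Lemma 2 of Dunfield–Garoufalidis: if an affine line `γ` in `ℝ²` contains infinitely
many lattice points, does not pass through the origin, the union of a collection of
subgroups `K n` of `ℤ²` contains all but finitely many lattice points of `γ`, and some
lattice point of `γ` lies in none of the `K n`, then there are infinitely many distinct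
subgroups among the `K n`. -/
theorem stmt_0 {ι : Type*} (p q : ℝ × ℝ) (hq : q ≠ 0)
    (γ : Set (ℝ × ℝ)) (hγ : γ = {x : ℝ × ℝ | ∃ t : ℝ, x = p + t • q})
    (h0 : (0 : ℝ × ℝ) ∉ γ)
    (K : ι → AddSubgroup (ℤ × ℤ))
    (hinf : {v : ℤ × ℤ | ((v.1 : ℝ), (v.2 : ℝ)) ∈ γ}.Infinite)
    (hcofin : {v : ℤ × ℤ | ((v.1 : ℝ), (v.2 : ℝ)) ∈ γ ∧ ∀ n, v ∉ K n}.Finite)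
    (hex : ∃ v : ℤ × ℤ, ((v.1 : ℝ), (v.2 : ℝ)) ∈ γ ∧ ∀ n, v ∉ K n) :
    (Set.range K).Infinite :=
  stmt_0_general p q γ hγ K hinf hcofin hex
end

section
/- Suppose that for every nonzero integer n we are given a subgroup K_n of ℤ × ℤ such that (1, n) ∈ K_n for every nonzero n, and such that (1, 0) ∉ K_n for every nonzero n. Then the set of subgroups {K_n : n ∈ ℤ, n ≠ 0} is infinite. -/
/-- The specialization of Lemma 2 used in the paper: if for every nonzero integer `n`
the subgroup `K n ≤ ℤ × ℤ` contains `(1, n)` but not `(1, 0)`, then the set of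
subgroups `{K n : n ≠ 0}` is infinite. -/
theorem stmt_1 (K : ℤ → AddSubgroup (ℤ × ℤ))
    (h1 : ∀ n : ℤ, n ≠ 0 → ((1, n) : ℤ × ℤ) ∈ K n)
    (h2 : ∀ n : ℤ, n ≠ 0 → ((1, 0) : ℤ × ℤ) ∉ K n) :
    (K '' {n : ℤ | n ≠ 0}).Infinite := by
  classical
  intro h
  -- h : (K '' {n | n ≠ 0}).Finite
  set F : Finset (AddSubgroup (ℤ × ℤ)) := h.toFinset with hF
  -- pick a nonzero "vertical period" for each subgroup, if it has one
  set d : AddSubgroup (ℤ × ℤ) → ℤ := fun G =>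
    if hG : ∃ e : ℤ, e ≠ 0 ∧ ((0, e) : ℤ × ℤ) ∈ G then hG.choose else 1 with hd
  have hdne : ∀ G, d G ≠ 0 := by
    intro G
    by_cases hG : ∃ e : ℤ, e ≠ 0 ∧ ((0, e) : ℤ × ℤ) ∈ G
    · simp only [hd, dif_pos hG]; exact hG.choose_spec.1
    · simp [hd, dif_neg hG]
  have hdmem : ∀ G, (∃ e : ℤ, e ≠ 0 ∧ ((0, e) : ℤ × ℤ) ∈ G) →
      ((0, d G) : ℤ × ℤ) ∈ G := by
    intro G hG
    simp only [hd, dif_pos hG]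
    exact hG.choose_spec.2
  set M : ℤ := ∏ G ∈ F, d G with hM
  have hMne : M ≠ 0 := Finset.prod_ne_zero_iff.2 fun G _ => hdne G
  -- pigeonhole on positive multiples of M
  have hmaps : Set.MapsTo (fun k : ℤ => K (M * k)) (Set.Ioi (0 : ℤ))
      (K '' {n : ℤ | n ≠ 0}) := by
    intro k hk
    exact ⟨M * k, mul_ne_zero hMne (ne_of_gt hk), rfl⟩
  obtain ⟨k₁, hk₁, k₂, hk₂, hkne, hkeq⟩ :=
    (Set.Ioi_infinite (0 : ℤ)).exists_ne_map_eq_of_mapsTo hmaps h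
  set G := K (M * k₁) with hG
  have hn₁ : M * k₁ ≠ 0 := mul_ne_zero hMne (ne_of_gt hk₁)
  have hn₂ : M * k₂ ≠ 0 := mul_ne_zero hMne (ne_of_gt hk₂)
  have hm₁ : ((1, M * k₁) : ℤ × ℤ) ∈ G := h1 _ hn₁
  have hm₂ : ((1, M * k₂) : ℤ × ℤ) ∈ G := by
    rw [hkeq]; exact h1 _ hn₂
  have hdiff : ((0, M * k₁ - M * k₂) : ℤ × ℤ) ∈ G := by
    have := G.sub_mem hm₁ hm₂
    simpa [Prod.ext_iff] using this
  have hex : ∃ e : ℤ, e ≠ 0 ∧ ((0, e) : ℤ × ℤ) ∈ G := by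
    refine ⟨M * k₁ - M * k₂, ?_, hdiff⟩
    intro hzero
    apply hkne
    have := sub_eq_zero.mp hzero
    exact mul_left_cancel₀ hMne this
  have hGF : G ∈ F := by
    rw [hF, Set.Finite.mem_toFinset]
    exact ⟨M * k₁, hn₁, rfl⟩
  have hdvd : d G ∣ M := Finset.dvd_prod_of_mem d hGF
  obtain ⟨c, hc⟩ := hdvd
  have h0M : ((0, M * k₁) : ℤ × ℤ) ∈ G := by
    have hbase := hdmem G hex
    have := G.zsmul_mem hbase (c * k₁)
    have heq : ((c * k₁) • ((0, d G) : ℤ × ℤ)) = ((0, M * k₁) : ℤ × ℤ) := by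
      rw [Prod.smul_mk]
      simp [hc, smul_eq_mul]
      ring
    rwa [heq] at this
  have h10 : ((1, 0) : ℤ × ℤ) ∈ G := by
    have := G.sub_mem hm₁ h0M
    simpa [Prod.ext_iff] using this
  exact h2 _ hn₁ h10
end

section
/- Let ρ₁ and ρ₂ be group homomorphisms from ℤ × ℤ to SU(2) such that trace(ρ₁(x)) = trace(ρ₂(x)) for every x ∈ ℤ × ℤ. Then ρ₁ and ρ₂ are conjugate: there exists U ∈ SU(2) such that ρ₂(x) = U * ρ₁(x) * U⁻¹ for every x ∈ ℤ × ℤ. -/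
/-!
Since `ℤ × ℤ` is abelian, the image of a representation is a commuting family in SU(2), and
such a family is diagonalised by a single element of SU(2): conjugate a non-scalar member to
diagonal form (complete a unit eigenvector `(a, b)` to the SU(2) matrix `[[a, -b̄], [b, ā]]`),
and note that whatever commutes with a diagonal matrix with distinct entries is diagonal.
A diagonal element of SU(2) is `diag(p, p⁻¹)`, so its trace determines it up to swapping the
entries, i.e. up to conjugation by the Weyl element `[[0, -1], [1, 0]]`. Hence, once both
representations are diagonalised, each `x` lies in one of two subgroups: where the diagonal
forms agree, or where they differ by the Weyl element. A group is never the union of two proper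
subgroups, so one conjugation works for every `x`.
-/

open Matrix Complex ComplexConjugate

local notation "SU₂" => specialUnitaryGroup (Fin 2) ℂ
local notation "M₂" => Matrix (Fin 2) (Fin 2) ℂ

theorem Subgroup.eq_top_or_eq_top_of_forall_mem_or_mem {G : Type*} [Group G] {H K : Subgroup G}
    (h : ∀ x, x ∈ H ∨ x ∈ K) : H = ⊤ ∨ K = ⊤ := by
  simp only [Subgroup.eq_top_iff']
  by_contra! ⟨⟨x, hxH⟩, ⟨y, hyK⟩⟩
  have hxK : x ∈ K := (h x).resolve_left hxH
  have hyH : y ∈ H := (h y).resolve_right hyK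
  rcases h (x * y) with hxy | hxy
  · exact hxH (by simpa using H.mul_mem hxy (H.inv_mem hyH))
  · exact hyK (by simpa using K.mul_mem (K.inv_mem hxK) hxy)

theorem eq_and_eq_or_eq_and_eq_of_add_eq_add_of_mul_eq_mul {R : Type*} [CommRing R]
    [NoZeroDivisors R] {a b c d : R} (hadd : a + b = c + d) (hmul : a * b = c * d) :
    c = a ∧ d = b ∨ c = b ∧ d = a := by
  have : (c - a) * (c - b) = 0 := by linear_combination (-c) * hadd + hmul
  rcases mul_eq_zero.mp this with h | h
  · exact .inl ⟨sub_eq_zero.mp h, by linear_combination -hadd - h⟩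
  · exact .inr ⟨sub_eq_zero.mp h, by linear_combination -hadd - h⟩

namespace Matrix

theorem IsDiag.isDiag_of_commute {n R : Type*} [Fintype n] [DecidableEq n] [CommRing R]
    [NoZeroDivisors R] {D B : Matrix n n R} (hD : D.IsDiag) (hd : Function.Injective D.diag)
    (h : Commute D B) : B.IsDiag := by
  intro i j hij
  have hij' := congrFun₂ h.eq i j
  rw [← hD.diagonal_diag, diagonal_mul, mul_diagonal] at hij'
  have : (D.diag i - D.diag j) * B i j = 0 := by linear_combination hij'
  exact (mul_eq_zero.mp this).resolve_left (sub_ne_zero.mpr (hd.ne hij))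

theorem diag_fin_two {R : Type*} (A : Matrix (Fin 2) (Fin 2) R) : A.diag = ![A 0 0, A 1 1] := by
  ext i; fin_cases i <;> rfl

theorem IsDiag.eq_scalar_fin_two {R : Type*} [CommRing R] {A : Matrix (Fin 2) (Fin 2) R}
    (hA : A.IsDiag) (h : A 0 0 = A 1 1) : A = scalar (Fin 2) (A 0 0) := by
  rw [← hA.diagonal_diag]
  ext i j; fin_cases i <;> fin_cases j <;> simp [h]

theorem IsDiag.det_fin_two {R : Type*} [CommRing R] {A : Matrix (Fin 2) (Fin 2) R}
    (hA : A.IsDiag) : A.det = A 0 0 * A 1 1 := by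
  rw [← hA.diagonal_diag, det_diagonal, Fin.prod_univ_two]; rfl

theorem apply_zero_one_of_mem_specialUnitaryGroup {A : M₂} (hA : A ∈ SU₂) :
    A 0 1 = -conj (A 1 0) := by
  obtain ⟨hU, hdet⟩ := mem_specialUnitaryGroup_iff.mp hA
  have hstar : star A = A⁻¹ := (inv_eq_left_inv (mem_unitaryGroup_iff'.mp hU)).symm
  rw [inv_def, hdet, Ring.inverse_one, one_smul, adjugate_fin_two] at hstar
  simpa using congrArg conj (congrFun₂ hstar 1 0)

theorem fin_two_mem_specialUnitaryGroup {a b : ℂ} (h : normSq a + normSq b = 1) :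
    !![a, -conj b; b, conj a] ∈ SU₂ := by
  have h' : a * conj a + b * conj b = 1 := by simp only [mul_conj]; exact_mod_cast h
  refine mem_specialUnitaryGroup_iff.mpr ⟨mem_unitaryGroup_iff'.mpr ?_, ?_⟩
  · ext i j
    fin_cases i <;> fin_cases j <;>
      simp only [Fin.zero_eta, Fin.mk_one, Fin.isValue, mul_apply, star_apply, of_apply, cons_val',
        cons_val_zero, cons_val_one, cons_val_fin_one, RCLike.star_def, Fin.sum_univ_two, map_neg,
        Complex.conj_conj, one_apply_eq, one_apply_ne, ne_eq, zero_ne_one, one_ne_zero,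
        not_false_eq_true] <;>
      grind
  · rw [det_fin_two_of]; linear_combination h'

theorem exists_unit_eigenvector_fin_two (A : M₂) :
    ∃ (μ : ℂ) (u : Fin 2 → ℂ), normSq (u 0) + normSq (u 1) = 1 ∧ A *ᵥ u = μ • u := by
  obtain ⟨μ, hμ⟩ := Module.End.exists_eigenvalue (toLin' A)
  obtain ⟨v, hv⟩ := hμ.exists_hasEigenvector
  set r := normSq (v 0) + normSq (v 1)
  have hr : 0 < r := by
    by_contra! hr0
    have hv0 : v 0 = 0 := normSq_eq_zero.mp (by linarith [normSq_nonneg (v 0), normSq_nonneg (v 1)])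
    have hv1 : v 1 = 0 := normSq_eq_zero.mp (by linarith [normSq_nonneg (v 0), normSq_nonneg (v 1)])
    exact hv.2 (funext fun i => by fin_cases i <;> assumption)
  refine ⟨μ, ((√r)⁻¹ : ℂ) • v, ?_, ?_⟩
  · simp only [Pi.smul_apply, smul_eq_mul, map_mul, map_inv₀, normSq_ofReal]
    rw [← mul_add, Real.mul_self_sqrt hr.le, inv_mul_cancel₀ hr.ne']
  · rw [mulVec_smul, ← toLin'_apply, hv.apply_eq_smul, smul_comm]

namespace specialUnitaryGroup

theorem trace_conj (V A : SU₂) : (↑(MulAut.conj V A) : M₂).trace = (A : M₂).trace := by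
  change (V.1 * A.1 * (V⁻¹).1).trace = _
  rw [trace_mul_cycle, ← Submonoid.coe_mul, inv_mul_cancel, Submonoid.coe_one, one_mul]

theorem exists_isDiag_conj (A : SU₂) : ∃ V : SU₂, (↑(MulAut.conj V A) : M₂).IsDiag := by
  obtain ⟨μ, u, hu, hAu⟩ := exists_unit_eigenvector_fin_two A
  let V : SU₂ := ⟨_, fin_two_mem_specialUnitaryGroup hu⟩
  refine ⟨V⁻¹, ?_⟩
  -- `V` sends `e₀` to the eigenvector `u`, so `V⁻¹ A V` has first column `(μ, 0)`.
  have h10 : (↑(MulAut.conj V⁻¹ A) : M₂) 1 0 = 0 := by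
    have h0 := congrFun hAu 0
    have h1 := congrFun hAu 1
    simp only [mulVec, dotProduct, Fin.sum_univ_two, Pi.smul_apply, smul_eq_mul] at h0 h1
    change (star V.1 * A * V⁻¹⁻¹.1) 1 0 = 0
    simp only [V, Fin.isValue, inv_inv, mul_apply, star_apply, of_apply, cons_val', cons_val_one,
      cons_val_fin_one, RCLike.star_def, Fin.sum_univ_two, cons_val_zero, map_neg,
      Complex.conj_conj, neg_mul]
    linear_combination (-u 1) * h0 + u 0 * h1
  have h01 := apply_zero_one_of_mem_specialUnitaryGroup (MulAut.conj V⁻¹ A).2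
  rw [h10, map_zero, neg_zero] at h01
  intro i j hij
  fin_cases i <;> fin_cases j <;> first | exact absurd rfl hij | assumption

theorem exists_forall_isDiag_conj {S : Set SU₂} (hS : ∀ A ∈ S, ∀ B ∈ S, Commute A B) :
    ∃ V : SU₂, ∀ A ∈ S, (↑(MulAut.conj V A) : M₂).IsDiag := by
  by_cases h : ∃ A₀ ∈ S, ∃ V : SU₂, (↑(MulAut.conj V A₀) : M₂).IsDiag ∧
      (↑(MulAut.conj V A₀) : M₂) 0 0 ≠ (↑(MulAut.conj V A₀) : M₂) 1 1
  · obtain ⟨A₀, hA₀, V, hD, hne⟩ := h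
    refine ⟨V, fun A hA => hD.isDiag_of_commute ?_ ?_⟩
    · rwa [diag_fin_two, injective_pair_iff_ne]
    · exact ((hS A₀ hA₀ A hA).map (MulAut.conj V)).map (specialUnitaryGroup (Fin 2) ℂ).subtype
  · -- Every member of `S` is then conjugate to a scalar matrix, hence itself scalar.
    push Not at h
    refine ⟨1, fun A hA => ?_⟩
    obtain ⟨V, hD⟩ := exists_isDiag_conj A
    have hscalar := hD.eq_scalar_fin_two (h A hA V hD)
    have hcomm : Commute (MulAut.conj V A) V⁻¹ := Subtype.ext <| by
      rw [Submonoid.coe_mul, Submonoid.coe_mul, hscalar]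
      exact (scalar_commute _ (Commute.all _) _).eq
    have hA : A = MulAut.conj V A := by
      calc A = V⁻¹ * MulAut.conj V A * V := by simp [mul_assoc]
        _ = MulAut.conj V A := by rw [← hcomm.eq, inv_mul_cancel_right]
    rwa [map_one, MulAut.one_apply, hA]

def weylElement : SU₂ :=
  ⟨!![0, -1; 1, 0], by simpa using fin_two_mem_specialUnitaryGroup (a := 0) (b := 1) (by simp)⟩

theorem coe_conj_weylElement (A : SU₂) :
    (↑(MulAut.conj weylElement A) : M₂) =
      !![(A : M₂) 1 1, -(A : M₂) 1 0; -(A : M₂) 0 1, (A : M₂) 0 0] := by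
  change weylElement.1 * A * star weylElement.1 = _
  ext i j
  fin_cases i <;> fin_cases j <;>
    simp [weylElement, mul_apply, vecMul, dotProduct, Fin.sum_univ_two]

theorem eq_or_eq_conj_weylElement_of_trace_eq {D₁ D₂ : SU₂} (h₁ : (D₁ : M₂).IsDiag)
    (h₂ : (D₂ : M₂).IsDiag) (htr : (D₁ : M₂).trace = (D₂ : M₂).trace) :
    D₂ = D₁ ∨ D₂ = MulAut.conj weylElement D₁ := by
  have hdet (D : SU₂) (hD : (D : M₂).IsDiag) : (D : M₂) 0 0 * (D : M₂) 1 1 = 1 := by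
    rw [← hD.det_fin_two]; exact (mem_specialUnitaryGroup_iff.mp D.2).2
  rw [trace_fin_two, trace_fin_two] at htr
  rcases eq_and_eq_or_eq_and_eq_of_add_eq_add_of_mul_eq_mul htr
    ((hdet D₁ h₁).trans (hdet D₂ h₂).symm) with ⟨h00, h11⟩ | ⟨h00, h11⟩
  · left
    ext i j
    fin_cases i <;> fin_cases j <;>
      simp [h00, h11, h₁ zero_ne_one, h₁ one_ne_zero, h₂ zero_ne_one, h₂ one_ne_zero]
  · right
    ext i j
    rw [coe_conj_weylElement]
    fin_cases i <;> fin_cases j <;>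
      simp [h00, h11, h₁ zero_ne_one, h₁ one_ne_zero, h₂ zero_ne_one, h₂ one_ne_zero]

theorem coe_inv (V : SU₂) : ((V⁻¹ : SU₂) : M₂) = (V : M₂)⁻¹ :=
  (inv_eq_right_inv (by rw [← Submonoid.coe_mul, mul_inv_cancel, Submonoid.coe_one])).symm

theorem exists_conj_of_trace_eq {G : Type*} [CommGroup G] (ρ₁ ρ₂ : G →* SU₂)
    (htr : ∀ x, (ρ₁ x : M₂).trace = (ρ₂ x : M₂).trace) :
    ∃ U : SU₂, ∀ x, ρ₂ x = MulAut.conj U (ρ₁ x) := by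
  have hcomm (ρ : G →* SU₂) : ∀ A ∈ Set.range ρ, ∀ B ∈ Set.range ρ, Commute A B := by
    rintro _ ⟨x, rfl⟩ _ ⟨y, rfl⟩
    exact (Commute.all x y).map ρ
  obtain ⟨V₁, hV₁⟩ := exists_forall_isDiag_conj (hcomm ρ₁)
  obtain ⟨V₂, hV₂⟩ := exists_forall_isDiag_conj (hcomm ρ₂)
  let D₁ := (MulAut.conj V₁).toMonoidHom.comp ρ₁
  let D₂ := (MulAut.conj V₂).toMonoidHom.comp ρ₂
  obtain ⟨C, hC⟩ : ∃ C : SU₂, ∀ x, D₂ x = MulAut.conj C (D₁ x) := by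
    have hcover x : x ∈ D₂.eqLocus D₁ ∨
        x ∈ D₂.eqLocus ((MulAut.conj weylElement).toMonoidHom.comp D₁) :=
      eq_or_eq_conj_weylElement_of_trace_eq (hV₁ _ ⟨x, rfl⟩) (hV₂ _ ⟨x, rfl⟩) <| by
        simp only [D₁, D₂, MonoidHom.comp_apply, MulEquiv.coe_toMonoidHom, trace_conj, htr]
    rcases Subgroup.eq_top_or_eq_top_of_forall_mem_or_mem hcover with h | h
    · refine ⟨1, fun x => ?_⟩
      rw [map_one, MulAut.one_apply]
      exact (Subgroup.eq_top_iff' _).mp h x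
    · exact ⟨weylElement, (Subgroup.eq_top_iff' _).mp h⟩
  refine ⟨V₂⁻¹ * C * V₁, fun x => ?_⟩
  have hx := hC x
  simp only [D₁, D₂, MonoidHom.comp_apply, MulEquiv.coe_toMonoidHom, MulAut.conj_apply] at hx ⊢
  calc ρ₂ x = V₂⁻¹ * (V₂ * ρ₂ x * V₂⁻¹) * V₂ := by group
    _ = _ := by rw [hx]; group

end specialUnitaryGroup

end Matrix

/-- Two representations of `ℤ × ℤ` into SU(2) with equal traces are conjugate: there is
`U ∈ SU(2)` with `ρ₂ x = U * ρ₁ x * U⁻¹` for all `x`. -/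
theorem stmt_12
    (ρ₁ ρ₂ : Multiplicative (ℤ × ℤ) →* Matrix.specialUnitaryGroup (Fin 2) ℂ)
    (htr : ∀ x : Multiplicative (ℤ × ℤ),
      ((ρ₁ x : Matrix (Fin 2) (Fin 2) ℂ)).trace = ((ρ₂ x : Matrix (Fin 2) (Fin 2) ℂ)).trace) :
    ∃ U : Matrix (Fin 2) (Fin 2) ℂ, U ∈ Matrix.specialUnitaryGroup (Fin 2) ℂ ∧
      ∀ x : Multiplicative (ℤ × ℤ),
        (ρ₂ x : Matrix (Fin 2) (Fin 2) ℂ) = U * (ρ₁ x : Matrix (Fin 2) (Fin 2) ℂ) * U⁻¹ := by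
  obtain ⟨U, hU⟩ := specialUnitaryGroup.exists_conj_of_trace_eq ρ₁ ρ₂ htr
  refine ⟨U, U.2, fun x => ?_⟩
  rw [hU x, MulAut.conj_apply, Submonoid.coe_mul, Submonoid.coe_mul, specialUnitaryGroup.coe_inv]
end
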